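/- For n ≥ k ≥ d = 2m+1 ≥ 5, the diameter of the graph of the ordinary polytope P^{d,k,n} equals ⌈n/k⌉. -/

import Mathlib

/-!
Every edge joins indices at most `k` apart, so a walk from `x_0` to `x_n` has at least `⌈n/k⌉`
steps. Conversely, to go from `x_a` to `x_b` write `b - a = qk + r` with `r < k` and use `q` edges
`{x_i, x_{i+k}}` together with one short edge if `1 ≤ r ≤ k - 2`, or two if `r = k - 1`. The two
short edges exceed the budget `⌈n/k⌉` only when `qk + k - 1 ≤ b - a ≤ n ≤ (q+1)k`, which forces
`a = 0`, or `a = 1` and `b = n`; then the edge `{x_0, x_{k-1}}`, resp. `{x_{n-k+1}, x_n}`, covers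
the remainder `k - 1` in one step.
-/

/-- Half of the adjacency relation of the graph of the ordinary polytope
`P^{d,k,n}` (on vertex indices, with `a < b`): `b - a ≤ k - 2`, or `b = a + k`,
or `{a,b} = {0, k-1}`, or `{a,b} = {n-k+1, n}`. -/
def oAdj (k n a b : ℕ) : Prop :=
  a < b ∧ (b - a ≤ k - 2 ∨ b = a + k ∨ (a = 0 ∧ b = k - 1) ∨ (a = n - k + 1 ∧ b = n))

/-- The graph of the ordinary polytope `P^{d,k,n}`, on the vertices `x_0, …, x_n`. -/
def ordinaryGraph (k n : ℕ) : SimpleGraph (Fin (n + 1)) where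
  Adj a b := oAdj k n a.val b.val ∨ oAdj k n b.val a.val
  symm := ⟨by intro a b h; tauto⟩
  loopless := ⟨by
    intro a h
    rcases h with h | h <;> exact absurd h.1 (lt_irrefl _)⟩

open SimpleGraph

theorem Nat.ceil_natCast_div_le_iff {K : Type*} [Field K] [LinearOrder K] [IsStrictOrderedRing K]
    [FloorSemiring K] {n k : ℕ} (hk : 0 < k) (L : ℕ) :
    ⌈(n : K) / k⌉₊ ≤ L ↔ n ≤ L * k := by
  rw [Nat.ceil_le, div_le_iff₀ (by positivity)]
  exact_mod_cast Iff.rfl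

theorem SimpleGraph.Walk.le_add_mul_length {V : Type*} {G : SimpleGraph V} (f : V → ℕ) {k : ℕ}
    (hf : ∀ u v, G.Adj u v → f v ≤ f u + k) {u v : V} (p : G.Walk u v) :
    f v ≤ f u + k * p.length := by
  induction p with
  | nil => simp
  | cons h p ih =>
    have := hf _ _ h
    rw [Walk.length_cons, mul_add_one]
    omega

theorem SimpleGraph.edist_le_edist_add_one_of_adj {V : Type*} {G : SimpleGraph V} {u v w : V}
    (h : G.Adj v w) : G.edist u w ≤ G.edist u v + 1 :=
  SimpleGraph.edist_triangle.trans_eq (by rw [edist_eq_one_iff_adj.2 h])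

theorem SimpleGraph.edist_le_one_add_edist_of_adj {V : Type*} {G : SimpleGraph V} {u v w : V}
    (h : G.Adj u v) : G.edist u w ≤ 1 + G.edist v w :=
  SimpleGraph.edist_triangle.trans_eq (by rw [edist_eq_one_iff_adj.2 h])

section ordinaryGraph

variable {k n : ℕ}

theorem ordinaryGraph_adj_of_lt_of_le_add_sub_two {u v : Fin (n + 1)} (huv : u < v)
    (h : (v : ℕ) ≤ u + (k - 2)) : (ordinaryGraph k n).Adj u v :=
  .inl ⟨huv, .inl (by omega)⟩

theorem ordinaryGraph_adj_of_eq_add (hk : 0 < k) {u v : Fin (n + 1)} (h : (v : ℕ) = u + k) :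
    (ordinaryGraph k n).Adj u v :=
  .inl ⟨by omega, .inr (.inl h)⟩

theorem ordinaryGraph_val_le_of_adj {u v : Fin (n + 1)} (h : (ordinaryGraph k n).Adj u v) :
    (v : ℕ) ≤ u + k := by
  rcases h with h | h <;> (unfold oAdj at h; omega)

theorem ordinaryGraph_edist_le_of_eq_add_mul (hk : 0 < k) {u : Fin (n + 1)} (q : ℕ) :
    ∀ {v : Fin (n + 1)}, (v : ℕ) = u + q * k → (ordinaryGraph k n).edist u v ≤ q := by
  induction q with
  | zero =>
    intro v h
    obtain rfl : v = u := Fin.ext (by simpa using h)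
    simp
  | succ q ih =>
    intro v h
    rw [add_one_mul, ← add_assoc] at h
    let w : Fin (n + 1) := ⟨v - k, by omega⟩
    calc (ordinaryGraph k n).edist u v ≤ (ordinaryGraph k n).edist u w + 1 :=
          edist_le_edist_add_one_of_adj (ordinaryGraph_adj_of_eq_add hk (by simp [w]; omega))
      _ ≤ q + 1 := by gcongr; exact ih (by simp [w]; omega)
      _ = (q + 1 : ℕ) := by norm_cast

theorem ordinaryGraph_edist_le_of_adj_of_eq_add_mul (hk : 0 < k) {u w v : Fin (n + 1)} {q : ℕ}
    (huw : (ordinaryGraph k n).Adj u w) (h : (v : ℕ) = w + q * k) :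
    (ordinaryGraph k n).edist u v ≤ (q + 1 : ℕ) :=
  calc (ordinaryGraph k n).edist u v ≤ 1 + (ordinaryGraph k n).edist w v :=
        edist_le_one_add_edist_of_adj huw
    _ ≤ 1 + q := by gcongr; exact ordinaryGraph_edist_le_of_eq_add_mul hk q h
    _ = (q + 1 : ℕ) := by norm_cast; omega

theorem ordinaryGraph_edist_le_of_eq_add_add_mul {u v : Fin (n + 1)} {r q : ℕ} (hr₀ : 0 < r)
    (hr : r ≤ k - 2) (hv : (v : ℕ) = u + r + q * k) :
    (ordinaryGraph k n).edist u v ≤ (q + 1 : ℕ) := by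
  let w : Fin (n + 1) := ⟨u + r, by omega⟩
  have huw : (ordinaryGraph k n).Adj u w :=
    ordinaryGraph_adj_of_lt_of_le_add_sub_two (by simp [w, Fin.lt_def]; omega)
      (by simp [w]; omega)
  exact ordinaryGraph_edist_le_of_adj_of_eq_add_mul (by omega) huw (by simp [w]; omega)

theorem ordinaryGraph_edist_le_of_eq_add_sub_one_add_mul (hk : 3 ≤ k) {u v : Fin (n + 1)} {q : ℕ}
    (hv : (v : ℕ) = u + (k - 1) + q * k) : (ordinaryGraph k n).edist u v ≤ (q + 2 : ℕ) := by
  let w : Fin (n + 1) := ⟨u + 1, by omega⟩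
  have huw : (ordinaryGraph k n).Adj u w :=
    ordinaryGraph_adj_of_lt_of_le_add_sub_two (by simp [w, Fin.lt_def]) (by simp [w]; omega)
  calc (ordinaryGraph k n).edist u v ≤ 1 + (ordinaryGraph k n).edist w v :=
        edist_le_one_add_edist_of_adj huw
    _ ≤ 1 + (q + 1 : ℕ) := by
        gcongr
        exact ordinaryGraph_edist_le_of_eq_add_add_mul (r := k - 2) (by omega) le_rfl
          (by simp [w]; omega)
    _ = (q + 2 : ℕ) := by norm_cast; omega

theorem ordinaryGraph_edist_le_of_eq_add_sub_one_add_mul_of_le (hk : 2 ≤ k) {u v : Fin (n + 1)}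
    {q : ℕ} (hv : (v : ℕ) = u + (k - 1) + q * k) (hn : n ≤ q * k + k) :
    (ordinaryGraph k n).edist u v ≤ (q + 1 : ℕ) := by
  have hvn := v.is_lt
  obtain hu | hu : (u : ℕ) = 0 ∨ (u : ℕ) = 1 := by omega
  · let w : Fin (n + 1) := ⟨k - 1, by omega⟩
    have huw : (ordinaryGraph k n).Adj u w :=
      .inl ⟨by simp [w]; omega, .inr (.inr (.inl ⟨hu, rfl⟩))⟩
    exact ordinaryGraph_edist_le_of_adj_of_eq_add_mul (by omega) huw (by simp [w]; omega)
  · let w : Fin (n + 1) := ⟨n - k + 1, by omega⟩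
    have hwv : (ordinaryGraph k n).Adj w v :=
      .inl ⟨by simp [w]; omega, .inr (.inr (.inr ⟨rfl, by omega⟩))⟩
    calc (ordinaryGraph k n).edist u v ≤ (ordinaryGraph k n).edist u w + 1 :=
          edist_le_edist_add_one_of_adj hwv
      _ ≤ q + 1 := by
          gcongr
          exact ordinaryGraph_edist_le_of_eq_add_mul (by omega) q (by simp [w]; omega)
      _ = (q + 1 : ℕ) := by norm_cast

theorem ordinaryGraph_edist_le_of_le (hk : 3 ≤ k) {c : ℕ} (hn : n ≤ c * k) {u v : Fin (n + 1)}
    (huv : u ≤ v) : (ordinaryGraph k n).edist u v ≤ c := by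
  have hk₀ : 0 < k := by omega
  obtain ⟨q, r, hr, hv⟩ : ∃ q r, r < k ∧ (v : ℕ) = u + r + q * k :=
    ⟨(v - u) / k, (v - u) % k, Nat.mod_lt _ hk₀, by
      have := Nat.mod_add_div' (v - u : ℕ) k; rw [Fin.le_def] at huv; omega⟩
  obtain rfl | hr₀ := Nat.eq_zero_or_pos r
  · have hqc : q ≤ c := Nat.le_of_mul_le_mul_right (by omega) hk₀
    exact (ordinaryGraph_edist_le_of_eq_add_mul hk₀ q (by omega)).trans (by exact_mod_cast hqc)
  have hqc : q < c := Nat.lt_of_mul_lt_mul_right (show q * k < c * k by omega)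
  rcases Nat.lt_or_ge r (k - 1) with hr' | hr'
  · exact (ordinaryGraph_edist_le_of_eq_add_add_mul hr₀ (by omega) hv).trans
      (by exact_mod_cast hqc)
  obtain hqc' | rfl : q + 1 < c ∨ c = q + 1 := by omega
  · exact (ordinaryGraph_edist_le_of_eq_add_sub_one_add_mul hk (q := q) (by omega)).trans
      (by exact_mod_cast hqc')
  · exact ordinaryGraph_edist_le_of_eq_add_sub_one_add_mul_of_le (by omega) (by omega)
      (by rwa [add_one_mul] at hn)

theorem ordinaryGraph_edist_le (hk : 3 ≤ k) {c : ℕ} (hn : n ≤ c * k) (u v : Fin (n + 1)) :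
    (ordinaryGraph k n).edist u v ≤ c := by
  rcases le_total u v with huv | hvu
  · exact ordinaryGraph_edist_le_of_le hk hn huv
  · rw [edist_comm]; exact ordinaryGraph_edist_le_of_le hk hn hvu

theorem ordinaryGraph_le_edist_zero_last {c : ℕ} (hc : ∀ L : ℕ, n ≤ L * k → c ≤ L) :
    (c : ℕ∞) ≤ (ordinaryGraph k n).edist 0 (Fin.last n) := by
  rw [edist_eq_sInf]
  refine le_sInf (Set.forall_mem_range.2 fun p ↦ ?_)
  have := p.le_add_mul_length Fin.val fun _ _ ↦ ordinaryGraph_val_le_of_adj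
  exact_mod_cast hc _ (by simpa [mul_comm] using this)

end ordinaryGraph

theorem ordinary_diameter_general (d k n : ℕ) (hd5 : 5 ≤ d) (hdk : d ≤ k) :
    (ordinaryGraph k n).diam = ⌈(n : ℚ) / (k : ℚ)⌉₊ := by
  have hc := Nat.ceil_natCast_div_le_iff (K := ℚ) (n := n) (k := k) (by omega)
  have hediam : (ordinaryGraph k n).ediam = ⌈(n : ℚ) / k⌉₊ :=
    le_antisymm (ediam_le_of_edist_le (ordinaryGraph_edist_le (by omega) ((hc _).1 le_rfl)))
      ((ordinaryGraph_le_edist_zero_last fun L ↦ (hc L).2).trans edist_le_ediam)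
  rw [diam, hediam, ENat.toNat_natCast]

/-- For `n ≥ k ≥ d = 2m+1 ≥ 5`, the diameter of the graph of the ordinary
polytope `P^{d,k,n}` is `⌈n / k⌉`. -/
theorem ordinary_diameter (d k n m : ℕ) (hdm : d = 2 * m + 1)
    (hd5 : 5 ≤ d) (hdk : d ≤ k) (hkn : k ≤ n) :
    (ordinaryGraph k n).diam = ⌈(n : ℚ) / (k : ℚ)⌉₊ :=
  ordinary_diameter_general d k n hd5 hdk
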